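/- Let σ : ℝ → ℝ be the sigmoid function σ(z) = 1/(1 + exp(−z)). Let u_1, …, u_n : ℝ^k → ℝ be twice continuously differentiable logit maps, let y_1, …, y_n ∈ ℝ, set f_i(θ) = σ(u_i(θ)), and define the empirical risk J(θ) = (1/n)·Σ_{i=1}^n −( y_i·log(f_i(θ)) + (1 − y_i)·log(1 − f_i(θ)) ). Then for every θ ∈ ℝ^k and every v ∈ ℝ^k, Hess J(θ)(v, v) ≤ ( (1/n)·Σ_{i=1}^n [ f_i(θ)·(1 − f_i(θ))·‖∇u_i(θ)‖² + |f_i(θ) − y_i|·‖Hess u_i(θ)‖ ] )·‖v‖², where Hess denotes the second-derivative bilinear form, ‖Hess u_i(θ)‖ its operator norm, and the vector norms are Euclidean. -/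

import Mathlib

/-!
Write the cross-entropy as a function of the logit, `ℓ_y z = (1 - y) z - log (σ z)`, using
`log (1 - σ z) = log (σ z) - z`. Then `ℓ_y' = σ - y` and `ℓ_y'' = σ (1 - σ) ≥ 0`, and the chain rule
gives `D²(ℓ_y ∘ u)(v, v) = ℓ_y''(u) (Du v)² + ℓ_y'(u) D²u(v, v)`. The first term is at most
`σ (1 - σ) ‖∇u‖² ‖v‖²` and the second at most `|σ - y| ‖D²u‖ ‖v‖²`; the Hessian of the empirical
risk is the average of these per-sample Hessians.
-/

/-- The sigmoid function `σ(z) = 1 / (1 + exp(−z))`. -/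
noncomputable def sigmoid (z : ℝ) : ℝ := 1 / (1 + Real.exp (-z))

theorem sigmoid_eq_real_sigmoid : sigmoid = Real.sigmoid :=
  funext fun _ => one_div _

noncomputable def logitLoss (y z : ℝ) : ℝ := (1 - y) * z - Real.log (Real.sigmoid z)

theorem binaryCrossEntropy_sigmoid_eq_logitLoss (y z : ℝ) :
    -(y * Real.log (Real.sigmoid z) + (1 - y) * Real.log (1 - Real.sigmoid z)) =
      logitLoss y z := by
  have hlog : Real.log (1 - Real.sigmoid z) = Real.log (Real.sigmoid z) - z := by
    rw [← Real.sigmoid_neg, ← Real.sigmoid_mul_rexp_neg,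
      Real.log_mul (Real.sigmoid_pos z).ne' (Real.exp_pos _).ne', Real.log_exp, sub_eq_add_neg]
  rw [hlog, logitLoss]
  ring

theorem hasDerivAt_logitLoss (y z : ℝ) : HasDerivAt (logitLoss y) (Real.sigmoid z - y) z := by
  have h := ((hasDerivAt_id' z).const_mul (1 - y)).sub
    ((Real.hasDerivAt_sigmoid z).log (Real.sigmoid_pos z).ne')
  refine h.congr_deriv ?_
  field_simp [(Real.sigmoid_pos z).ne']
  ring

theorem contDiff_logitLoss (y : ℝ) {n : WithTop ℕ∞} : ContDiff ℝ n (logitLoss y) :=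
  (contDiff_const.mul contDiff_id).sub
    ((contDiff_sigmoid.of_le le_top).log fun z => (Real.sigmoid_pos z).ne')

section SecondDerivative

variable {E : Type*} [NormedAddCommGroup E] [NormedSpace ℝ E]

theorem iteratedFDeriv_two_comp_apply {φ φ' : ℝ → ℝ} {φ'' : ℝ} {u : E → ℝ} {θ : E}
    (hφ : ∀ z, HasDerivAt φ (φ' z) z) (hφ' : HasDerivAt φ' φ'' (u θ)) (hu : ContDiff ℝ 2 u)
    (v w : E) :
    iteratedFDeriv ℝ 2 (φ ∘ u) θ ![v, w] =
      φ'' * fderiv ℝ u θ v * fderiv ℝ u θ w + φ' (u θ) * iteratedFDeriv ℝ 2 u θ ![v, w] := by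
  have hDu : ∀ x, HasFDerivAt u (fderiv ℝ u x) x :=
    fun x => (hu.differentiable two_ne_zero x).hasFDerivAt
  have hDφu : fderiv ℝ (φ ∘ u) = fun x => φ' (u x) • fderiv ℝ u x :=
    funext fun x => ((hφ (u x)).comp_hasFDerivAt x (hDu x)).fderiv
  have hD2u : HasFDerivAt (fderiv ℝ u) (fderiv ℝ (fderiv ℝ u) θ) θ :=
    ((hu.fderiv_right (m := 1) one_add_one_eq_two.le).differentiable one_ne_zero θ).hasFDerivAt
  have hφ'u : HasFDerivAt (fun x => φ' (u x)) (φ'' • fderiv ℝ u θ) θ :=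
    hφ'.comp_hasFDerivAt θ (hDu θ)
  rw [iteratedFDeriv_two_apply, iteratedFDeriv_two_apply, hDφu, (hφ'u.fun_smul hD2u).fderiv]
  simp only [Matrix.cons_val_zero, Matrix.cons_val_one, Matrix.cons_val_fin_one,
    add_apply, smul_apply, ContinuousLinearMap.smulRight_apply, smul_eq_mul]
  ring

theorem norm_iteratedFDeriv_two_apply_le (u : E → ℝ) (θ v w : E) :
    ‖iteratedFDeriv ℝ 2 u θ ![v, w]‖ ≤ ‖iteratedFDeriv ℝ 2 u θ‖ * (‖v‖ * ‖w‖) := by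
  simpa [Fin.prod_univ_two] using (iteratedFDeriv ℝ 2 u θ).le_opNorm ![v, w]

theorem iteratedFDeriv_two_comp_apply_self_le {φ φ' : ℝ → ℝ} {φ'' : ℝ} {u : E → ℝ} {θ : E}
    (hφ : ∀ z, HasDerivAt φ (φ' z) z) (hφ' : HasDerivAt φ' φ'' (u θ)) (hφ'' : 0 ≤ φ'')
    (hu : ContDiff ℝ 2 u) (v : E) :
    iteratedFDeriv ℝ 2 (φ ∘ u) θ ![v, v] ≤
      (φ'' * ‖fderiv ℝ u θ‖ ^ 2 + |φ' (u θ)| * ‖iteratedFDeriv ℝ 2 u θ‖) * ‖v‖ ^ 2 := by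
  have hDu : |fderiv ℝ u θ v| ≤ ‖fderiv ℝ u θ‖ * ‖v‖ := (fderiv ℝ u θ).le_opNorm v
  have hD2u : |iteratedFDeriv ℝ 2 u θ ![v, v]| ≤ ‖iteratedFDeriv ℝ 2 u θ‖ * (‖v‖ * ‖v‖) :=
    norm_iteratedFDeriv_two_apply_le u θ v v
  rw [iteratedFDeriv_two_comp_apply hφ hφ' hu]
  calc φ'' * fderiv ℝ u θ v * fderiv ℝ u θ v + φ' (u θ) * iteratedFDeriv ℝ 2 u θ ![v, v]
      ≤ φ'' * |fderiv ℝ u θ v| ^ 2 + |φ' (u θ)| * |iteratedFDeriv ℝ 2 u θ ![v, v]| := by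
        rw [sq_abs, mul_assoc, ← sq, ← abs_mul]
        gcongr
        exact le_abs_self _
    _ ≤ φ'' * (‖fderiv ℝ u θ‖ * ‖v‖) ^ 2 +
          |φ' (u θ)| * (‖iteratedFDeriv ℝ 2 u θ‖ * (‖v‖ * ‖v‖)) := by gcongr
    _ = _ := by ring

end SecondDerivative

theorem norm_gradient_eq_norm_fderiv {F : Type*} [NormedAddCommGroup F] [InnerProductSpace ℝ F]
    [CompleteSpace F] (u : F → ℝ) (θ : F) : ‖gradient u θ‖ = ‖fderiv ℝ u θ‖ :=
  (InnerProductSpace.toDual ℝ F).symm.norm_map _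

theorem iteratedFDeriv_two_logitLoss_comp_apply_self_le {F : Type*} [NormedAddCommGroup F]
    [InnerProductSpace ℝ F] [CompleteSpace F] (y : ℝ) {u : F → ℝ} (hu : ContDiff ℝ 2 u)
    (θ v : F) :
    iteratedFDeriv ℝ 2 (logitLoss y ∘ u) θ ![v, v] ≤
      (Real.sigmoid (u θ) * (1 - Real.sigmoid (u θ)) * ‖gradient u θ‖ ^ 2 +
        |Real.sigmoid (u θ) - y| * ‖iteratedFDeriv ℝ 2 u θ‖) * ‖v‖ ^ 2 := by
  rw [norm_gradient_eq_norm_fderiv]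
  exact iteratedFDeriv_two_comp_apply_self_le (hasDerivAt_logitLoss y)
    ((Real.hasDerivAt_sigmoid (u θ)).sub_const y)
    (mul_nonneg (Real.sigmoid_nonneg _) (sub_nonneg.mpr (Real.sigmoid_le_one _))) hu v

/-- Theorem 2 (group Hessian bound): for a binary classifier `fᵢ = σ ∘ uᵢ`
trained with binary cross-entropy loss on `n` samples, the Hessian quadratic
form of the empirical risk is bounded by the average over the samples of
`fᵢ(1 − fᵢ)‖∇uᵢ‖² + |fᵢ − yᵢ| ‖Hess uᵢ‖`, times `‖v‖²`. -/
theorem hessian_quadForm_empiricalRisk_le {n k : ℕ}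
    (u : Fin n → EuclideanSpace ℝ (Fin k) → ℝ) (hu : ∀ i, ContDiff ℝ 2 (u i))
    (y : Fin n → ℝ)
    (f : Fin n → EuclideanSpace ℝ (Fin k) → ℝ)
    (hf : ∀ i ω, f i ω = sigmoid (u i ω))
    (J : EuclideanSpace ℝ (Fin k) → ℝ)
    (hJ : ∀ ω, J ω = (1 / (n : ℝ)) *
      ∑ i, -(y i * Real.log (f i ω) + (1 - y i) * Real.log (1 - f i ω))) :
    ∀ (θ v : EuclideanSpace ℝ (Fin k)),
      iteratedFDeriv ℝ 2 J θ ![v, v] ≤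
        ((1 / (n : ℝ)) * ∑ i, (f i θ * (1 - f i θ) * ‖gradient (u i) θ‖ ^ 2
          + |f i θ - y i| * ‖iteratedFDeriv ℝ 2 (u i) θ‖)) * ‖v‖ ^ 2 := by
  intro θ v
  have hloss : ∀ i ∈ Finset.univ, ContDiff ℝ 2 (logitLoss (y i) ∘ u i) :=
    fun i _ => (contDiff_logitLoss (y i)).comp (hu i)
  have hJ_eq : J = fun ω => (1 / (n : ℝ)) • ∑ i, (logitLoss (y i) ∘ u i) ω := by
    funext ω
    simp only [hJ, hf, sigmoid_eq_real_sigmoid, binaryCrossEntropy_sigmoid_eq_logitLoss,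
      Function.comp_apply, smul_eq_mul]
  simp only [hf, sigmoid_eq_real_sigmoid]
  rw [hJ_eq, iteratedFDeriv_const_smul_apply' (ContDiff.sum hloss).contDiffAt,
    iteratedFDeriv_sum hloss, mul_assoc, Finset.sum_mul]
  simp only [smul_apply, Finset.sum_apply, sum_apply, smul_eq_mul]
  gcongr with i
  exact iteratedFDeriv_two_logitLoss_comp_apply_self_le (y i) (hu i) θ v
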